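/- arXiv:2212.09145 — 2 statements merged into one kernel-verified Lean document; each statement's English description precedes it below -/
import Mathlib

section
/- In the setting of the PLS iteration — H a real Hilbert space, Y_0 = Y a centered square-integrable real random variable, X_0 = X a centered H-valued square-integrable random variable, and for k ≥ 1: w_k ∈ H, ξ_k = ⟨X_{k-1}, w_k⟩, ρ_k = E[ξ_k X_{k-1}]/E[ξ_k²], c_k = E[ξ_k Y_{k-1}]/E[ξ_k²], X_k = X_{k-1} − ξ_k ρ_k, Y_k = Y_{k-1} − c_k ξ_k (with E[ξ_k²] ≠ 0 for all k) — the components ξ_1, ..., ξ_h are pairwise uncorrelated: E[ξ_k ξ_l] = 0 for all 1 ≤ k < l ≤ h. -/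
open RealInnerProductSpace MeasureTheory

/-- Orthogonality of the PLS components (Proposition 2): `E[ξ_k ξ_l] = 0` for `k < l`. -/
theorem stmt7 {H : Type*} [NormedAddCommGroup H] [InnerProductSpace ℝ H] [CompleteSpace H]
    {Ω : Type*} [MeasureSpace Ω] [IsProbabilityMeasure (volume : Measure Ω)]
    (h : ℕ) (X : ℕ → Ω → H) (Y : ℕ → Ω → ℝ) (ξ : ℕ → Ω → ℝ)
    (w ρ : ℕ → H) (c : ℕ → ℝ)
    (hY0 : ∫ ω, Y 0 ω = 0) (hX0 : (∫ ω, X 0 ω) = 0)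
    (hξ : ∀ k, 1 ≤ k → ∀ ω, ξ k ω = ⟪X (k-1) ω, w k⟫)
    (hvar : ∀ k, 1 ≤ k → (∫ ω, (ξ k ω)^2) ≠ 0)
    (hρ : ∀ k, 1 ≤ k →
      ρ k = (∫ ω, (ξ k ω)^2)⁻¹ • (∫ ω, ξ k ω • X (k-1) ω))
    (hc : ∀ k, 1 ≤ k → c k = (∫ ω, (ξ k ω)^2)⁻¹ * (∫ ω, ξ k ω * Y (k-1) ω))
    (hX : ∀ k, 1 ≤ k → ∀ ω, X k ω = X (k-1) ω - ξ k ω • ρ k)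
    (hYrec : ∀ k, 1 ≤ k → ∀ ω, Y k ω = Y (k-1) ω - c k * ξ k ω)
    (hintX : ∀ k, Integrable (fun ω => ξ k ω • X (k-1) ω))
    (hintξ : ∀ k l, Integrable (fun ω => ξ k ω * ξ l ω))
    (hintY : ∀ k l, Integrable (fun ω => ξ k ω * Y l ω)) :
    ∀ k l, 1 ≤ k → k < l → l ≤ h → (∫ ω, ξ k ω * ξ l ω) = 0 := by
  -- Key lemma: for 1 ≤ k ≤ l, ξ_k • X_l is integrable with integral 0.
  have key : ∀ k, 1 ≤ k → ∀ l, k ≤ l →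
      Integrable (fun ω => ξ k ω • X l ω) ∧ (∫ ω, ξ k ω • X l ω) = 0 := by
    intro k hk
    intro l hl
    induction l, hl using Nat.le_induction with
    | base =>
      have heq : (fun ω => ξ k ω • X k ω)
          = fun ω => ξ k ω • X (k-1) ω - (ξ k ω * ξ k ω) • ρ k := by
        funext ω
        rw [hX k hk ω, smul_sub, smul_smul]
      have hint : Integrable (fun ω => ξ k ω • X k ω) := by
        rw [heq]
        exact (hintX k).sub ((hintξ k k).smul_const (ρ k))
      refine ⟨hint, ?_⟩
      rw [heq, integral_sub (hintX k) ((hintξ k k).smul_const (ρ k)),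
        integral_smul_const]
      have h2 : (∫ ω, ξ k ω * ξ k ω) = ∫ ω, (ξ k ω)^2 := by
        congr 1; funext ω; ring
      rw [h2, hρ k hk, smul_smul, mul_inv_cancel₀ (hvar k hk), one_smul, sub_self]
    | succ l hl ih =>
      have hl1 : 1 ≤ l + 1 := Nat.le_add_left 1 l
      have hll : l + 1 - 1 = l := rfl
      -- E[ξ_k ξ_{l+1}] = ⟪w_{l+1}, E[ξ_k X_l]⟫ = 0
      have hcross : (∫ ω, ξ k ω * ξ (l+1) ω) = 0 := by
        have heq : (fun ω => ξ k ω * ξ (l+1) ω)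
            = fun ω => ⟪w (l+1), ξ k ω • X l ω⟫ := by
          funext ω
          rw [hξ (l+1) hl1 ω, hll, real_inner_smul_right, real_inner_comm]
        rw [heq, integral_inner ih.1, ih.2, inner_zero_right]
      have heq : (fun ω => ξ k ω • X (l+1) ω)
          = fun ω => ξ k ω • X l ω - (ξ k ω * ξ (l+1) ω) • ρ (l+1) := by
        funext ω
        rw [hX (l+1) hl1 ω, hll, smul_sub, smul_smul]
      have hint : Integrable (fun ω => ξ k ω • X (l+1) ω) := by
        rw [heq]
        exact ih.1.sub ((hintξ k (l+1)).smul_const _)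
      refine ⟨hint, ?_⟩
      rw [heq, integral_sub ih.1 ((hintξ k (l+1)).smul_const _),
        integral_smul_const, ih.2, hcross, zero_smul, sub_self]
  intro k l hk hkl _
  obtain ⟨m, rfl⟩ : ∃ m, l = m + 1 := ⟨l - 1, (Nat.succ_pred_eq_of_pos (by omega)).symm⟩
  have hm : k ≤ m := by omega
  have hl1 : 1 ≤ m + 1 := Nat.le_add_left 1 m
  have heq : (fun ω => ξ k ω * ξ (m+1) ω)
      = fun ω => ⟪w (m+1), ξ k ω • X m ω⟫ := by
    funext ω
    rw [hξ (m+1) hl1 ω, real_inner_smul_right, real_inner_comm]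
    rfl
  rw [heq, integral_inner (key k hk m hm).1, (key k hk m hm).2, inner_zero_right]
end

section
/- Let H be a real Hilbert space, X an H-valued random variable, and let ξ_k, ρ_k, w_k (k = 1,...,h) be as in the PLS iteration with ξ_k = ⟨X_{k-1}, w_k⟩. Define v_1, ..., v_h by v_k = w_k − Σ_{i<k} ⟨ρ_i, w_k⟩ v_i. Then for every k ≤ h, ξ_k = ⟨X, v_k⟩; that is, each PLS component is a linear functional of the original (undeflated) predictor X. -/
open RealInnerProductSpace MeasureTheory

/-- Lemma 1: each PLS component is a linear functional of the undeflated predictor,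
`ξ_k = ⟨X, v_k⟩`, where `v_k = w_k − ∑_{i<k} ⟪ρ_i, w_k⟫ v_i`. -/
theorem stmt10 {H : Type*} [NormedAddCommGroup H] [InnerProductSpace ℝ H] [CompleteSpace H]
    {Ω : Type*} [MeasureSpace Ω] [IsProbabilityMeasure (volume : Measure Ω)]
    (h : ℕ) (X : ℕ → Ω → H) (ξ : ℕ → Ω → ℝ) (w ρ v : ℕ → H)
    (hξ : ∀ k, 1 ≤ k → k ≤ h → ∀ ω, ξ k ω = ⟪X (k-1) ω, w k⟫)
    (hXrec : ∀ k, 1 ≤ k → k ≤ h → ∀ ω, X k ω = X (k-1) ω - ξ k ω • ρ k)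
    (hv : ∀ k, 1 ≤ k → k ≤ h →
      v k = w k - ∑ i ∈ Finset.Icc 1 (k-1), ⟪ρ i, w k⟫ • v i) :
    ∀ k, 1 ≤ k → k ≤ h → ∀ ω, ξ k ω = ⟪X 0 ω, v k⟫ := by
  -- X m = X 0 - ∑_{i=1}^m ξ i • ρ i
  have hXsum : ∀ m, m ≤ h → ∀ ω,
      X m ω = X 0 ω - ∑ i ∈ Finset.Icc 1 m, ξ i ω • ρ i := by
    intro m
    induction m with
    | zero => intro _ ω; simp
    | succ n ih =>
      intro hm ω
      rw [hXrec (n+1) (Nat.succ_le_succ (Nat.zero_le n)) hm ω]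
      simp only [Nat.add_sub_cancel]
      rw [ih (Nat.le_of_succ_le hm) ω,
        Finset.sum_Icc_succ_top (Nat.one_le_iff_ne_zero.mpr (Nat.succ_ne_zero n))]
      abel
  intro k
  induction k using Nat.strong_induction_on with
  | _ k ih =>
    intro hk1 hkh ω
    rw [hξ k hk1 hkh ω, hXsum (k-1) (le_trans (Nat.sub_le k 1) hkh) ω,
      hv k hk1 hkh]
    rw [inner_sub_left, inner_sub_right, sum_inner]
    rw [inner_sum]
    congr 1
    apply Finset.sum_congr rfl
    intro i hi
    simp only [Finset.mem_Icc] at hi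
    rw [real_inner_smul_left, real_inner_smul_right,
      ← ih i (lt_of_le_of_lt hi.2 (Nat.sub_lt_of_pos_le Nat.one_pos hk1)) hi.1
        (le_trans (le_trans hi.2 (Nat.sub_le k 1)) hkh) ω]
    ring
end
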